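/- arXiv:2508.07657 — 4 statements merged into one kernel-verified Lean document; each statement's English description precedes it below -/
import Mathlib

section
/- Let N be a finite nonempty index set, let T > 0 be a real number, and let 0 < t_1 < t_2 < ⋯ be a strictly increasing sequence of return times with t_i → ∞. Suppose at each return time t_i a vector v_i : N → ℝ with 0 ≤ v_i(n) ≤ t_i for all n is delivered, and define the operator's knowledge u(t)(n) as the maximum of 0 and all values v_i(n) over indices i with t_i ≤ t, the latency δ(t) = max over n in N of (t − u(t)(n)), and χ_i = min over n in N of v_i(n) with χ_0 = 0. If (I) t_i ≤ T + χ_{i−1} for every i ≥ 1, and (II) χ_i > χ_{i−1} for every i ≥ 1, then δ(t) ≤ T for all t ≥ 0. -/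
/-!
Fix `τ` and let `i` be the least index with `τ < t (i + 1)`; it exists because `t → ∞`, and
by minimality either `i = 0` or `t i ≤ τ`. In both cases the knowledge `u τ n` dominates `χ i`
(the `i`-th delivery has already been merged, or `χ 0 = 0 ≤ u τ n`), so condition (I) for the
return `i + 1` gives `τ - u τ n < t (i + 1) - χ i ≤ T`.
-/

open Filter

lemma exists_eq_zero_or_le_and_lt_succ_of_tendsto_atTop {α : Type*} [LinearOrder α]
    [NoMaxOrder α] {t : ℕ → α} (ht : Tendsto t atTop atTop) (τ : α) :
    ∃ i, (i = 0 ∨ 1 ≤ i ∧ t i ≤ τ) ∧ τ < t (i + 1) := by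
  have hex : ∃ i, τ < t (i + 1) :=
    ((ht.comp (tendsto_add_atTop_nat 1)).eventually_gt_atTop τ).exists
  refine ⟨Nat.find hex, ?_, Nat.find_spec hex⟩
  rcases Nat.eq_zero_or_eq_succ_pred (Nat.find hex) with h | h
  · exact Or.inl h
  · refine Or.inr ⟨by omega, not_lt.mp ?_⟩
    rw [h]
    exact Nat.find_min hex (by omega)

lemma bddAbove_insert_zero_delivered {t w : ℕ → ℝ} (hw : ∀ i, 1 ≤ i → w i ≤ t i) (τ : ℝ) :
    BddAbove (insert (0 : ℝ) {x | ∃ i, 1 ≤ i ∧ t i ≤ τ ∧ x = w i}) := by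
  refine ⟨max τ 0, ?_⟩
  rintro x (rfl | ⟨i, hi, hti, rfl⟩)
  · exact le_max_right _ _
  · exact le_max_of_le_left ((hw i hi).trans hti)

lemma min_delivered_le_sSup {ι : Type*} [Fintype ι] [Nonempty ι] {t : ℕ → ℝ}
    {v : ℕ → ι → ℝ} (hvt : ∀ i, 1 ≤ i → ∀ n, v i n ≤ t i) {χ : ℕ → ℝ} (hχ0 : χ 0 = 0)
    (hχ : ∀ i, 1 ≤ i → χ i = Finset.univ.inf' Finset.univ_nonempty (fun n => v i n))
    {τ : ℝ} {i : ℕ} (hi : i = 0 ∨ 1 ≤ i ∧ t i ≤ τ) (n : ι) :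
    χ i ≤ sSup (insert (0 : ℝ) {x | ∃ i, 1 ≤ i ∧ t i ≤ τ ∧ x = v i n}) := by
  have hbdd := bddAbove_insert_zero_delivered (fun j hj => hvt j hj n) τ
  rcases hi with rfl | ⟨hi1, hti⟩
  · exact hχ0.symm ▸ le_csSup hbdd (Set.mem_insert _ _)
  · calc χ i ≤ v i n := hχ i hi1 ▸ Finset.inf'_le _ (Finset.mem_univ n)
      _ ≤ _ := le_csSup hbdd (Set.mem_insert_of_mem _ ⟨i, hi1, hti, rfl⟩)

theorem latency_bound_at_return_events_general
    {ι : Type*} [Fintype ι] [Nonempty ι]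
    (T : ℝ)
    (t : ℕ → ℝ)
    (htinf : Filter.Tendsto t Filter.atTop Filter.atTop)
    (v : ℕ → ι → ℝ)
    (hvt : ∀ i, 1 ≤ i → ∀ n, v i n ≤ t i)
    (u : ℝ → ι → ℝ)
    (hu : ∀ τ n, u τ n = sSup (insert (0 : ℝ) {x | ∃ i, 1 ≤ i ∧ t i ≤ τ ∧ x = v i n}))
    (δ : ℝ → ℝ)
    (hδ : ∀ τ, δ τ = Finset.univ.sup' Finset.univ_nonempty (fun n => τ - u τ n))
    (χ : ℕ → ℝ)
    (hχ0 : χ 0 = 0)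
    (hχ : ∀ i, 1 ≤ i → χ i = Finset.univ.inf' Finset.univ_nonempty (fun n => v i n))
    (hI : ∀ i, 1 ≤ i → t i ≤ T + χ (i - 1)) :
    ∀ τ : ℝ, 0 ≤ τ → δ τ ≤ T := by
  intro τ _
  obtain ⟨i, hi, hτ⟩ := exists_eq_zero_or_le_and_lt_succ_of_tendsto_atTop htinf τ
  have hnext : t (i + 1) ≤ T + χ i := hI (i + 1) (Nat.le_add_left 1 i)
  rw [hδ]
  refine Finset.sup'_le _ _ fun n _ => ?_
  have hχu : χ i ≤ u τ n := hu τ n ▸ min_delivered_le_sSup hvt hχ0 hχ hi n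
  linarith

/-- Proposition 1 (latency bound at return events): if each return event happens
before the latency exceeds the bound `T` and the delivered minimum timestamps
strictly increase, then the operator's latency is bounded by `T` at all times. -/
theorem latency_bound_at_return_events
    {ι : Type*} [Fintype ι] [Nonempty ι]
    (T : ℝ) (hT : 0 < T)
    (t : ℕ → ℝ)
    (ht1 : 0 < t 1)
    (htmono : ∀ i, 1 ≤ i → t i < t (i + 1))
    (htinf : Filter.Tendsto t Filter.atTop Filter.atTop)
    (v : ℕ → ι → ℝ)
    (hv0 : ∀ i, 1 ≤ i → ∀ n, 0 ≤ v i n)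
    (hvt : ∀ i, 1 ≤ i → ∀ n, v i n ≤ t i)
    (u : ℝ → ι → ℝ)
    (hu : ∀ τ n, u τ n = sSup (insert (0 : ℝ) {x | ∃ i, 1 ≤ i ∧ t i ≤ τ ∧ x = v i n}))
    (δ : ℝ → ℝ)
    (hδ : ∀ τ, δ τ = Finset.univ.sup' Finset.univ_nonempty (fun n => τ - u τ n))
    (χ : ℕ → ℝ)
    (hχ0 : χ 0 = 0)
    (hχ : ∀ i, 1 ≤ i → χ i = Finset.univ.inf' Finset.univ_nonempty (fun n => v i n))
    (hI : ∀ i, 1 ≤ i → t i ≤ T + χ (i - 1))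
    (hII : ∀ i, 1 ≤ i → χ (i - 1) < χ i) :
    ∀ τ : ℝ, 0 ≤ τ → δ τ ≤ T :=
  latency_bound_at_return_events_general T t htinf v hvt u hu δ hδ χ hχ0 hχ hI
end

section
/- In the cyclic gossip model with N ≥ 2 robots, for every event index k and every robot n ∈ ZMod N, the common vector held by the two participants of event k after that event satisfies: V_{k+1}(k mod N)(n) = s_j, where j is the largest index with j ≤ k such that n = j mod N or n = (j+1) mod N, and V_{k+1}(k mod N)(n) = 0 if no such j exists. In other words, after each event the participants know, for every robot n, exactly the timestamp of the most recent event up to k in which robot n participated. -/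
/-!
Robot `k` took part in event `k - 1` together with robot `k - 1`, so by induction on `k` it
enters event `k` holding exactly the latest stamp of every robot. Its partner `k + 1` can hold
nothing newer than these: no robot ever holds a stamp later than the latest event in which the
stamped robot took part. Hence the maximum taken in the update is the latest stamp.
-/

section LastStamp

variable (s : ℕ → ℝ) (p : ℕ → Prop) [DecidablePred p]

/-- `lastStamp s p k = s j` for the last `j < k` with `p j`, and `0` if there is no such `j`. -/
def lastStamp : ℕ → ℝ
  | 0 => 0
  | k + 1 => if p k then s k else lastStamp k

variable {s p}

theorem lastStamp_le (hs : Monotone s) (hs0 : 0 ≤ s 0) : ∀ k, lastStamp s p k ≤ s k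
  | 0 => hs0
  | k + 1 => by
    rw [lastStamp]
    split_ifs
    · exact hs k.le_succ
    · exact (lastStamp_le hs hs0 k).trans (hs k.le_succ)

theorem lastStamp_monotone (hs : Monotone s) (hs0 : 0 ≤ s 0) : Monotone (lastStamp s p) :=
  monotone_nat_of_le_succ fun k => by
    rw [lastStamp]
    split_ifs
    · exact lastStamp_le hs hs0 k
    · exact le_rfl

theorem lastStamp_eq_zero : ∀ {k}, (∀ j < k, ¬ p j) → lastStamp s p k = 0
  | 0, _ => rfl
  | k + 1, h => by
    rw [lastStamp, if_neg (h k k.lt_succ_self)]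
    exact lastStamp_eq_zero fun j hj => h j (hj.trans k.lt_succ_self)

theorem lastStamp_succ_eq_findGreatest :
    ∀ {k}, (∃ j ≤ k, p j) → lastStamp s p (k + 1) = s (Nat.findGreatest p k)
  | 0, ⟨j, hj, hpj⟩ => by
    obtain rfl := Nat.le_zero.mp hj
    simp [lastStamp, hpj]
  | k + 1, ⟨j, hj, hpj⟩ => by
    rw [lastStamp, Nat.findGreatest_succ]
    split_ifs with hpk
    · rfl
    · have hjk : j ≤ k := Nat.le_of_lt_succ (lt_of_le_of_ne hj (by rintro rfl; exact hpk hpj))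
      exact lastStamp_succ_eq_findGreatest ⟨j, hjk, hpj⟩

end LastStamp

namespace RingGossip

variable {N : ℕ}

def Participates (n : ZMod N) (k : ℕ) : Prop :=
  n = (k : ZMod N) ∨ n = ((k + 1 : ℕ) : ZMod N)

instance (n : ZMod N) : DecidablePred (Participates n) := fun _ => instDecidableOr

/-- The timestamp update (15)–(17). -/
def IsUpdate (s : ℕ → ℝ) (V : ℕ → ZMod N → ZMod N → ℝ) : Prop :=
  ∀ k i n, V (k + 1) i n =
    if Participates i k then
      (if Participates n k then s k else max (V k (k : ZMod N) n) (V k ((k + 1 : ℕ) : ZMod N) n))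
    else V k i n

variable {s : ℕ → ℝ} {V : ℕ → ZMod N → ZMod N → ℝ}

theorem participates_self (k : ℕ) : Participates (k : ZMod N) k := Or.inl rfl

theorem participates_succ (k : ℕ) : Participates ((k + 1 : ℕ) : ZMod N) k := Or.inr rfl

theorem IsUpdate.apply_succ_of_participates (hV : IsUpdate s V) {k : ℕ} {i : ZMod N}
    (hi : Participates i k) (n : ZMod N) : V (k + 1) i n = V (k + 1) k n := by
  rw [hV, hV, if_pos hi, if_pos (participates_self k)]

theorem IsUpdate.le_lastStamp (hV : IsUpdate s V) (hV0 : ∀ i n, V 0 i n = 0)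
    (hs : Monotone s) (hs0 : 0 ≤ s 0) (n : ZMod N) :
    ∀ k i, V k i n ≤ lastStamp s (Participates n) k
  | 0, i => (hV0 i n).le
  | k + 1, i => by
    have ih := hV.le_lastStamp hV0 hs hs0 n k
    rw [hV, lastStamp]
    split_ifs
    · exact le_rfl
    · exact max_le (ih _) (ih _)
    · exact (ih i).trans (lastStamp_le hs hs0 k)
    · exact ih i

theorem IsUpdate.apply_succ_self_of_apply_self (hV : IsUpdate s V) (hV0 : ∀ i n, V 0 i n = 0)
    (hs : Monotone s) (hs0 : 0 ≤ s 0) {k : ℕ} {n : ZMod N}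
    (hk : V k k n = lastStamp s (Participates n) k) :
    V (k + 1) k n = lastStamp s (Participates n) (k + 1) := by
  rw [hV, lastStamp, if_pos (participates_self k)]
  split_ifs
  · rfl
  · rw [hk]
    exact max_eq_left (hV.le_lastStamp hV0 hs hs0 n k _)

theorem IsUpdate.apply_succ_self (hV : IsUpdate s V) (hV0 : ∀ i n, V 0 i n = 0)
    (hs : Monotone s) (hs0 : 0 ≤ s 0) (n : ZMod N) :
    ∀ k, V (k + 1) k n = lastStamp s (Participates n) (k + 1)
  | 0 => hV.apply_succ_self_of_apply_self hV0 hs hs0 (hV0 _ n)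
  | k + 1 => hV.apply_succ_self_of_apply_self hV0 hs hs0 <| by
    rw [hV.apply_succ_of_participates (participates_succ k) n]
    exact hV.apply_succ_self hV0 hs hs0 n k

end RingGossip

open RingGossip in
theorem gossip_participants_know_latest_event_general
    (N : ℕ)
    (s : ℕ → ℝ) (hs0 : 0 < s 0) (hsmono : StrictMono s)
    (V : ℕ → ZMod N → ZMod N → ℝ)
    (hV0 : ∀ i n : ZMod N, V 0 i n = 0)
    (hVstep : ∀ (k : ℕ) (i n : ZMod N),
      V (k + 1) i n =
        if i = (k : ZMod N) ∨ i = ((k + 1 : ℕ) : ZMod N) then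
          (if n = (k : ZMod N) ∨ n = ((k + 1 : ℕ) : ZMod N) then s k
           else max (V k (k : ZMod N) n) (V k ((k + 1 : ℕ) : ZMod N) n))
        else V k i n) :
    ∀ (k : ℕ) (n : ZMod N),
      ((∃ j, j ≤ k ∧ (n = (j : ZMod N) ∨ n = ((j + 1 : ℕ) : ZMod N))) →
        ∃ j, j ≤ k ∧ (n = (j : ZMod N) ∨ n = ((j + 1 : ℕ) : ZMod N)) ∧
          (∀ j', j' ≤ k → (n = (j' : ZMod N) ∨ n = ((j' + 1 : ℕ) : ZMod N)) → j' ≤ j) ∧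
          V (k + 1) (k : ZMod N) n = s j) ∧
      ((¬ ∃ j, j ≤ k ∧ (n = (j : ZMod N) ∨ n = ((j + 1 : ℕ) : ZMod N))) →
        V (k + 1) (k : ZMod N) n = 0) := by
  intro k n
  have hV : IsUpdate s V := hVstep
  have hknow := hV.apply_succ_self hV0 hsmono.monotone hs0.le n k
  refine ⟨fun ⟨j, hj, hpj⟩ => ?_, fun hnone => ?_⟩
  · refine ⟨Nat.findGreatest (Participates n) k, Nat.findGreatest_le k,
      Nat.findGreatest_spec (P := Participates n) hj hpj, fun j' hj' hpj' => Nat.le_findGreatest hj' hpj', ?_⟩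
    rw [hknow, lastStamp_succ_eq_findGreatest ⟨j, hj, hpj⟩]
  · rw [hknow, lastStamp_eq_zero (p := Participates n) fun j hj hpj => hnone ⟨j, Nat.le_of_lt_succ hj, hpj⟩]

/-- In the cyclic gossip model on a ring of `N ≥ 2` robots, after each event the
two participants know, for every robot `n`, exactly the timestamp of the most
recent event (up to the current one) in which robot `n` participated, and `0`
if robot `n` has not participated in any event yet. -/
theorem gossip_participants_know_latest_event
    (N : ℕ) [NeZero N] (hN : 2 ≤ N)
    (s : ℕ → ℝ) (hs0 : 0 < s 0) (hsmono : StrictMono s)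
    (V : ℕ → ZMod N → ZMod N → ℝ)
    (hV0 : ∀ i n : ZMod N, V 0 i n = 0)
    (hVstep : ∀ (k : ℕ) (i n : ZMod N),
      V (k + 1) i n =
        if i = (k : ZMod N) ∨ i = ((k + 1 : ℕ) : ZMod N) then
          (if n = (k : ZMod N) ∨ n = ((k + 1 : ℕ) : ZMod N) then s k
           else max (V k (k : ZMod N) n) (V k ((k + 1 : ℕ) : ZMod N) n))
        else V k i n) :
    ∀ (k : ℕ) (n : ZMod N),
      ((∃ j, j ≤ k ∧ (n = (j : ZMod N) ∨ n = ((j + 1 : ℕ) : ZMod N))) →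
        ∃ j, j ≤ k ∧ (n = (j : ZMod N) ∨ n = ((j + 1 : ℕ) : ZMod N)) ∧
          (∀ j', j' ≤ k → (n = (j' : ZMod N) ∨ n = ((j' + 1 : ℕ) : ZMod N)) → j' ≤ j) ∧
          V (k + 1) (k : ZMod N) n = s j) ∧
      ((¬ ∃ j, j ≤ k ∧ (n = (j : ZMod N) ∨ n = ((j + 1 : ℕ) : ZMod N))) →
        V (k + 1) (k : ZMod N) n = 0) :=
  gossip_participants_know_latest_event_general N s hs0 hsmono V hV0 hVstep
end

section
/- In the cyclic gossip model with N ≥ 2 robots, for every event index k ≥ N − 2, the minimum entry of the participants' common vector after event k equals the event time from N − 2 events earlier: min over n ∈ ZMod N of V_{k+1}(k mod N)(n) = s_{k−N+2} (and this minimum equals 0 whenever k < N − 2). Consequently, since the event times s_k are strictly increasing, the sequence k ↦ min_n V_{k+1}(k mod N)(n) is strictly increasing for k ≥ N − 2. -/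
/-!
Robot `k` meets robot `k + 1` at event `k`, and by then it has just absorbed the vector of
robot `k - 1`, which in turn carries the freshest news of the robots behind it. Induction on `k`
shows that after event `k` the common vector records, for `k + 2 ≤ j ≤ k + N`, the time of
event `j - N` (the last meeting of robot `j` with robot `j + 1`), and `s k` for robot
`k + 1`; the vector of robot `k + 1` itself only contributes older information. The minimum is
therefore attained at robot `k + 2`: it is the time of event `k + 2 - N`.
-/

theorem ZMod.natCast_ne_natCast_of_lt_of_lt_add {N a b : ℕ} (hab : a < b) (hba : b < a + N) :
    (a : ZMod N) ≠ b := by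
  intro h
  have := ((ZMod.natCast_eq_natCast_iff a b N).mp h).eq_of_abs_lt
    (by rw [abs_lt]; constructor <;> omega)
  omega

theorem ZMod.exists_natCast_eq {N : ℕ} [NeZero N] (a : ℕ) (n : ZMod N) :
    ∃ j, a ≤ j ∧ j < a + N ∧ (j : ZMod N) = n :=
  ⟨a + (n - (a : ZMod N)).val, by omega, by have := ZMod.val_lt (n - (a : ZMod N)); omega, by
    push_cast [ZMod.natCast_zmod_val]; ring⟩

namespace CyclicGossip

structure IsRun (N : ℕ) (s : ℕ → ℝ) (V : ℕ → ZMod N → ZMod N → ℝ) : Prop where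
  init : ∀ i n : ZMod N, V 0 i n = 0
  step : ∀ (k : ℕ) (i n : ZMod N),
    V (k + 1) i n =
      if i = (k : ZMod N) ∨ i = ((k + 1 : ℕ) : ZMod N) then
        (if n = (k : ZMod N) ∨ n = ((k + 1 : ℕ) : ZMod N) then s k
         else max (V k (k : ZMod N) n) (V k ((k + 1 : ℕ) : ZMod N) n))
      else V k i n

def delayedTime (s : ℕ → ℝ) (N j : ℕ) : ℝ :=
  if N ≤ j then s (j - N) else 0

theorem delayedTime_mono {s : ℕ → ℝ} (hs : Monotone s) (hs₀ : ∀ m, 0 ≤ s m) (N : ℕ) :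
    Monotone (delayedTime s N) := by
  intro i j hij
  unfold delayedTime
  split_ifs
  exacts [hs (by omega), by omega, hs₀ _, le_rfl]

variable {N : ℕ} {s : ℕ → ℝ} {V : ℕ → ZMod N → ZMod N → ℝ}

theorem IsRun.succ_apply_of_ne (hV : IsRun N s V) {k : ℕ} {i : ZMod N}
    (hi₁ : i ≠ k) (hi₂ : i ≠ ((k + 1 : ℕ) : ZMod N)) (n : ZMod N) :
    V (k + 1) i n = V k i n := by
  rw [hV.step, if_neg (not_or.mpr ⟨hi₁, hi₂⟩)]

theorem IsRun.succ_apply_succ (hV : IsRun N s V) (k : ℕ) (n : ZMod N) :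
    V (k + 1) ((k + 1 : ℕ) : ZMod N) n = V (k + 1) (k : ZMod N) n := by
  rw [hV.step, hV.step, if_pos (Or.inr rfl), if_pos (Or.inl rfl)]

theorem IsRun.succ_apply_of_eq (hV : IsRun N s V) (k : ℕ) {n : ZMod N}
    (hn : n = k ∨ n = ((k + 1 : ℕ) : ZMod N)) :
    V (k + 1) (k : ZMod N) n = s k := by
  rw [hV.step, if_pos (Or.inl rfl), if_pos hn]

theorem IsRun.succ_apply_of_ne_of_ne (hV : IsRun N s V) (k : ℕ) {n : ZMod N}
    (hn₁ : n ≠ k) (hn₂ : n ≠ ((k + 1 : ℕ) : ZMod N)) :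
    V (k + 1) (k : ZMod N) n = max (V k (k : ZMod N) n) (V k ((k + 1 : ℕ) : ZMod N) n) := by
  rw [hV.step, if_pos (Or.inl rfl), if_neg (not_or.mpr ⟨hn₁, hn₂⟩)]

theorem IsRun.apply_eq_of_idle (hV : IsRun N s V) {i : ZMod N} {a b : ℕ} (hab : a ≤ b)
    (hidle : ∀ m, a ≤ m → m < b → i ≠ m ∧ i ≠ ((m + 1 : ℕ) : ZMod N)) :
    V b i = V a i := by
  induction b, hab using Nat.le_induction with
  | base => rfl
  | succ b hab ih =>
    obtain ⟨hi₁, hi₂⟩ := hidle b hab b.lt_succ_self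
    funext n
    rw [hV.succ_apply_of_ne hi₁ hi₂, ih fun m h₁ h₂ => hidle m h₁ (by omega)]

theorem IsRun.apply_le (hV : IsRun N s V) (hs : Monotone s) (hs₀ : ∀ m, 0 ≤ s m)
    {k m : ℕ} (hkm : k ≤ m + 1) (i n : ZMod N) : V k i n ≤ s m := by
  induction k generalizing i n with
  | zero => rw [hV.init]; exact hs₀ m
  | succ k ih =>
    rw [hV.step]
    split_ifs
    exacts [hs (by omega), max_le (ih (by omega) _ _) (ih (by omega) _ _), ih (by omega) _ _]

/-- Robot `k + 1` has been idle since event `k + 1 - N`. -/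
theorem IsRun.apply_succ_le_delayedTime (hV : IsRun N s V) (hN : 2 ≤ N) (hs : Monotone s)
    (hs₀ : ∀ m, 0 ≤ s m) {k j : ℕ} (hj : k + 2 ≤ j) :
    V k ((k + 1 : ℕ) : ZMod N) j ≤ delayedTime s N j := by
  have hidle : V k ((k + 1 : ℕ) : ZMod N) = V (k + 2 - N) ((k + 1 : ℕ) : ZMod N) :=
    hV.apply_eq_of_idle (by omega) fun m h₁ h₂ =>
      ⟨(ZMod.natCast_ne_natCast_of_lt_of_lt_add (by omega) (by omega)).symm,
        (ZMod.natCast_ne_natCast_of_lt_of_lt_add (by omega) (by omega)).symm⟩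
  rw [hidle, delayedTime]
  split_ifs with hNj
  · exact hV.apply_le hs hs₀ (by omega) _ _
  · rw [show k + 2 - N = 0 by omega, hV.init]

theorem IsRun.succ_apply_natCast_of_apply_self (hV : IsRun N s V) (hN : 2 ≤ N)
    (hs : Monotone s) (hs₀ : ∀ m, 0 ≤ s m) {k j : ℕ} (hj₁ : k + 2 ≤ j) (hj₂ : j ≤ k + N)
    (hself : j < k + N → V k (k : ZMod N) j = delayedTime s N j) :
    V (k + 1) (k : ZMod N) j = delayedTime s N j := by
  obtain hj₂ | rfl := hj₂.lt_or_eq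
  · rw [hV.succ_apply_of_ne_of_ne k
      (ZMod.natCast_ne_natCast_of_lt_of_lt_add (by omega) (by omega)).symm
      (ZMod.natCast_ne_natCast_of_lt_of_lt_add (by omega) (by omega)).symm,
      hself hj₂]
    exact max_eq_left (hV.apply_succ_le_delayedTime hN hs hs₀ hj₁)
  · rw [hV.succ_apply_of_eq k (Or.inl (by simp)), delayedTime, if_pos (by omega),
      Nat.add_sub_cancel]

theorem IsRun.succ_apply_natCast (hV : IsRun N s V) (hN : 2 ≤ N) (hs : Monotone s)
    (hs₀ : ∀ m, 0 ≤ s m) {k j : ℕ} (hj₁ : k + 2 ≤ j) (hj₂ : j ≤ k + N) :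
    V (k + 1) (k : ZMod N) j = delayedTime s N j := by
  induction k generalizing j with
  | zero =>
    refine hV.succ_apply_natCast_of_apply_self hN hs hs₀ hj₁ hj₂ fun hj => ?_
    rw [hV.init, delayedTime, if_neg (by omega)]
  | succ k ih =>
    refine hV.succ_apply_natCast_of_apply_self hN hs hs₀ hj₁ hj₂ fun hj => ?_
    rw [hV.succ_apply_succ]
    exact ih (by omega) (by omega)

theorem IsRun.inf'_succ_apply [NeZero N] (hV : IsRun N s V) (hN : 2 ≤ N) (hs : Monotone s)
    (hs₀ : ∀ m, 0 ≤ s m) (k : ℕ) :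
    Finset.univ.inf' Finset.univ_nonempty (fun n => V (k + 1) (k : ZMod N) n) =
      delayedTime s N (k + 2) := by
  apply le_antisymm
  · calc Finset.univ.inf' Finset.univ_nonempty (fun n => V (k + 1) (k : ZMod N) n)
        ≤ V (k + 1) (k : ZMod N) ((k + 2 : ℕ) : ZMod N) := Finset.inf'_le _ (Finset.mem_univ _)
      _ = delayedTime s N (k + 2) := hV.succ_apply_natCast hN hs hs₀ le_rfl (by omega)
  · refine Finset.le_inf' _ _ fun n _ => ?_
    obtain ⟨j, hj₁, hj₂, rfl⟩ := ZMod.exists_natCast_eq (k + 1) n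
    obtain rfl | hj₁ := hj₁.eq_or_lt
    · rw [hV.succ_apply_of_eq k (Or.inr rfl), delayedTime]
      split_ifs
      exacts [hs (by omega), hs₀ k]
    · rw [hV.succ_apply_natCast hN hs hs₀ hj₁ (by omega)]
      exact delayedTime_mono hs hs₀ N hj₁

end CyclicGossip

/-- Combinatorial core of Lemma 1: in the cyclic gossip model with `N ≥ 2`
robots, for `k ≥ N - 2` the minimum entry of the participants' common vector
after event `k` equals the event time from `N - 2` events earlier (and it is
`0` for `k < N - 2`); consequently this sequence of minima is strictly
increasing for `k ≥ N - 2`. -/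
theorem gossip_min_delivered_timestamp
    (N : ℕ) [NeZero N] (hN : 2 ≤ N)
    (s : ℕ → ℝ) (hs0 : 0 < s 0) (hsmono : StrictMono s)
    (V : ℕ → ZMod N → ZMod N → ℝ)
    (hV0 : ∀ i n : ZMod N, V 0 i n = 0)
    (hVstep : ∀ (k : ℕ) (i n : ZMod N),
      V (k + 1) i n =
        if i = (k : ZMod N) ∨ i = ((k + 1 : ℕ) : ZMod N) then
          (if n = (k : ZMod N) ∨ n = ((k + 1 : ℕ) : ZMod N) then s k
           else max (V k (k : ZMod N) n) (V k ((k + 1 : ℕ) : ZMod N) n))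
        else V k i n) :
    (∀ k : ℕ, N - 2 ≤ k →
      Finset.univ.inf' Finset.univ_nonempty (fun n => V (k + 1) (k : ZMod N) n)
        = s (k + 2 - N)) ∧
    (∀ k : ℕ, k < N - 2 →
      Finset.univ.inf' Finset.univ_nonempty (fun n => V (k + 1) (k : ZMod N) n)
        = 0) ∧
    (∀ k k' : ℕ, N - 2 ≤ k → k < k' →
      Finset.univ.inf' Finset.univ_nonempty (fun n => V (k + 1) (k : ZMod N) n)
        < Finset.univ.inf' Finset.univ_nonempty (fun n => V (k' + 1) (k' : ZMod N) n)) := by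
  have hs₀ : ∀ m, 0 ≤ s m := fun m => hs0.le.trans (hsmono.monotone m.zero_le)
  have hmin := CyclicGossip.IsRun.inf'_succ_apply ⟨hV0, hVstep⟩ hN hsmono.monotone hs₀
  refine ⟨fun k hk => ?_, fun k hk => ?_, fun k k' hk hkk' => ?_⟩
  · rw [hmin, CyclicGossip.delayedTime, if_pos (by omega)]
  · rw [hmin, CyclicGossip.delayedTime, if_neg (by omega)]
  · rw [hmin, hmin, CyclicGossip.delayedTime, CyclicGossip.delayedTime, if_pos (by omega),
      if_pos (by omega)]
    exact hsmono (by omega)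
end

section
/- Consider the cyclic gossip model with N ≥ 2 robots and strictly increasing positive event times s_0 < s_1 < ⋯. Suppose there is a strictly increasing sequence of return indices N − 2 ≤ k_1 < k_2 < ⋯ and return times τ_1 < τ_2 < ⋯ with s_{k_m} ≤ τ_m for all m and τ_m → ∞, and that at time τ_m one participant of event k_m delivers the participants' common post-event vector V_{k_m+1}(k_m mod N) to the operator, whose knowledge is U(t)(n) = maximum of 0 and all delivered values V_{k_m+1}(k_m mod N)(n) over m with τ_m ≤ t. Let T > 0. If τ_1 ≤ T and τ_m ≤ T + s_{k_{m−1} − N + 2} for all m ≥ 2, then the operator's latency satisfies max over n ∈ ZMod N of (t − U(t)(n)) ≤ T for all t ≥ 0. -/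
/-!
Each event hands the common vector of its two participants on to the next event, and the next
event adds one more robot, stamped with its own (later) event time. Hence after event `j` the
participants know every robot's state at time `s (j + 2 - N)` or later: the last `N - 1` events
of the cycle have swept through all `N` robots. At time `t`, let `m` be the last return with
`τ m ≤ t`; its delivery makes every entry of `U t` at least `s (k m + 2 - N)`, and
`t < τ (m + 1) ≤ T + s (k m + 2 - N)`. Before the first return, `t < τ 1 ≤ T` and `U t ≥ 0`.
-/

open Filter

def CyclicGossipStep {N : ℕ} (s : ℕ → ℝ) (V : ℕ → ZMod N → ZMod N → ℝ) : Prop :=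
  ∀ (k : ℕ) (i n : ZMod N),
    V (k + 1) i n =
      if i = (k : ZMod N) ∨ i = ((k + 1 : ℕ) : ZMod N) then
        (if n = (k : ZMod N) ∨ n = ((k + 1 : ℕ) : ZMod N) then s k
         else max (V k (k : ZMod N) n) (V k ((k + 1 : ℕ) : ZMod N) n))
      else V k i n

namespace CyclicGossipStep

variable {N : ℕ} {s : ℕ → ℝ} {V : ℕ → ZMod N → ZMod N → ℝ}

theorem participants_agree (hV : CyclicGossipStep s V) (j : ℕ) (n : ZMod N) :
    V (j + 1) (j : ZMod N) n = V (j + 1) ((j + 1 : ℕ) : ZMod N) n := by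
  rw [hV, hV, if_pos (Or.inl rfl), if_pos (Or.inr rfl)]

theorem le_eventTime (hV : CyclicGossipStep s V) (hV0 : ∀ i n, V 0 i n = 0)
    (hs0 : 0 ≤ s 0) (hs : Monotone s) (j : ℕ) (i n : ZMod N) :
    V (j + 1) i n ≤ s j := by
  induction j generalizing i n with
  | zero =>
    rw [hV]
    split_ifs
    · exact le_rfl
    · simpa only [hV0, max_self] using hs0
    · simpa only [hV0] using hs0
  | succ j ih =>
    have hsj : s j ≤ s (j + 1) := hs j.le_succ
    rw [hV]
    split_ifs
    · exact le_rfl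
    · exact (max_le (ih _ _) (ih _ _)).trans hsj
    · exact (ih _ _).trans hsj

theorem eventTime_le_of_le_add_one (hV : CyclicGossipStep s V) (hs : Monotone s)
    (b d r : ℕ) (hr : r ≤ d + 1) :
    s b ≤ V (b + d + 1) ((b + d : ℕ) : ZMod N) ((b + r : ℕ) : ZMod N) := by
  induction d generalizing r with
  | zero =>
    simp only [Nat.add_zero]
    rw [hV, if_pos (Or.inl rfl), if_pos]
    interval_cases r
    · exact Or.inl rfl
    · exact Or.inr rfl
  | succ d ih =>
    rw [hV, if_pos (Or.inl rfl)]
    split_ifs with hnew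
    · exact hs (by omega)
    · have hrd : r ≤ d + 1 := by
        by_contra hrd
        exact hnew (Or.inr (by rw [show r = d + 2 by omega]; rfl))
      exact le_max_of_le_left ((ih r hrd).trans_eq (hV.participants_agree (b + d) _))

theorem eventTime_sub_le [NeZero N] (hV : CyclicGossipStep s V) (hs : Monotone s)
    (hN : 2 ≤ N) {j : ℕ} (hj : N ≤ j + 2) (n : ZMod N) :
    s (j + 2 - N) ≤ V (j + 1) (j : ZMod N) n := by
  set b := j + 2 - N
  have hn : n = ((b + (n - b : ZMod N).val : ℕ) : ZMod N) := by simp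
  have hr : (n - b : ZMod N).val ≤ N - 2 + 1 := by have := ZMod.val_lt (n - b : ZMod N); omega
  have hbj : b + (N - 2) = j := by omega
  rw [hn, ← hbj]
  exact hV.eventTime_le_of_le_add_one hs b (N - 2) _ hr

end CyclicGossipStep

theorem exists_le_lt_succ_of_tendsto_atTop {α : Type*} [LinearOrder α] [NoMaxOrder α]
    {τ : ℕ → α} (hτ : Tendsto τ atTop atTop) {a : ℕ} {t : α} (ha : τ a ≤ t) :
    ∃ m, a ≤ m ∧ τ m ≤ t ∧ t < τ (m + 1) := by
  by_contra! h
  have hle : ∀ m, a ≤ m → τ m ≤ t := fun m hm =>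
    Nat.le_induction ha (fun m hm ih => h m hm ih) m hm
  obtain ⟨m, hm⟩ := (hτ.eventually_gt_atTop t).and (eventually_ge_atTop a) |>.exists
  exact (hle m hm.2).not_gt hm.1

theorem gossip_return_events_guarantee_latency_bound_general
    (N : ℕ) [NeZero N] (hN : 2 ≤ N)
    (s : ℕ → ℝ) (hs0 : 0 < s 0) (hsmono : StrictMono s)
    (V : ℕ → ZMod N → ZMod N → ℝ)
    (hV0 : ∀ i n : ZMod N, V 0 i n = 0)
    (hVstep : ∀ (k : ℕ) (i n : ZMod N),
      V (k + 1) i n =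
        if i = (k : ZMod N) ∨ i = ((k + 1 : ℕ) : ZMod N) then
          (if n = (k : ZMod N) ∨ n = ((k + 1 : ℕ) : ZMod N) then s k
           else max (V k (k : ZMod N) n) (V k ((k + 1 : ℕ) : ZMod N) n))
        else V k i n)
    (k : ℕ → ℕ) (τ : ℕ → ℝ)
    (hk1 : N - 2 ≤ k 1)
    (hkmono : ∀ m, 1 ≤ m → k m < k (m + 1))
    (hsτ : ∀ m, 1 ≤ m → s (k m) ≤ τ m)
    (hτinf : Filter.Tendsto τ Filter.atTop Filter.atTop)
    (U : ℝ → ZMod N → ℝ)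
    (hU : ∀ (t : ℝ) (n : ZMod N),
      U t n = sSup (insert (0 : ℝ)
        {x | ∃ m, 1 ≤ m ∧ τ m ≤ t ∧ x = V (k m + 1) ((k m : ℕ) : ZMod N) n}))
    (T : ℝ)
    (hτ1 : τ 1 ≤ T)
    (hτm : ∀ m, 2 ≤ m → τ m ≤ T + s (k (m - 1) + 2 - N)) :
    ∀ t : ℝ, 0 ≤ t →
      Finset.univ.sup' Finset.univ_nonempty (fun n => t - U t n) ≤ T := by
  intro t _
  refine Finset.sup'_le _ _ fun n _ => ?_
  have hbdd : BddAbove (insert (0 : ℝ)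
      {x | ∃ m, 1 ≤ m ∧ τ m ≤ t ∧ x = V (k m + 1) ((k m : ℕ) : ZMod N) n}) := by
    refine bddAbove_insert.2 ⟨t, ?_⟩
    rintro _ ⟨m, hm, hmt, rfl⟩
    exact (CyclicGossipStep.le_eventTime hVstep hV0 hs0.le hsmono.monotone _ _ _).trans
      ((hsτ m hm).trans hmt)
  have hU0 : 0 ≤ U t n := hU t n ▸ le_csSup hbdd (Set.mem_insert _ _)
  rcases lt_or_ge t (τ 1) with ht1 | ht1
  · linarith
  obtain ⟨M, hM1, hMt, htM⟩ := exists_le_lt_succ_of_tendsto_atTop hτinf ht1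
  have hkM : N - 2 ≤ k M :=
    hk1.trans (Nat.le_induction le_rfl (fun m hm ih => ih.trans (hkmono m hm).le) M hM1)
  have hfresh : s (k M + 2 - N) ≤ V (k M + 1) ((k M : ℕ) : ZMod N) n :=
    CyclicGossipStep.eventTime_sub_le hVstep hsmono.monotone hN (by omega) n
  have hdelivered : V (k M + 1) ((k M : ℕ) : ZMod N) n ≤ U t n :=
    hU t n ▸ le_csSup hbdd (Set.mem_insert_of_mem _ ⟨M, hM1, hMt, rfl⟩)
  have hnext := hτm (M + 1) (by omega)
  rw [Nat.add_sub_cancel] at hnext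
  linarith

/-- Lemma 1 (abstract content): along the cyclic gossip protocol, if the return
robots deliver the participants' common post-event vectors to the operator and
the return times satisfy `τ 1 ≤ T` and `τ m ≤ T + s (k (m-1) + 2 - N)` for
`m ≥ 2`, then the operator's maximum latency is bounded by `T` at all times. -/
theorem gossip_return_events_guarantee_latency_bound
    (N : ℕ) [NeZero N] (hN : 2 ≤ N)
    (s : ℕ → ℝ) (hs0 : 0 < s 0) (hsmono : StrictMono s)
    (V : ℕ → ZMod N → ZMod N → ℝ)
    (hV0 : ∀ i n : ZMod N, V 0 i n = 0)
    (hVstep : ∀ (k : ℕ) (i n : ZMod N),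
      V (k + 1) i n =
        if i = (k : ZMod N) ∨ i = ((k + 1 : ℕ) : ZMod N) then
          (if n = (k : ZMod N) ∨ n = ((k + 1 : ℕ) : ZMod N) then s k
           else max (V k (k : ZMod N) n) (V k ((k + 1 : ℕ) : ZMod N) n))
        else V k i n)
    (k : ℕ → ℕ) (τ : ℕ → ℝ)
    (hk1 : N - 2 ≤ k 1)
    (hkmono : ∀ m, 1 ≤ m → k m < k (m + 1))
    (hτmono : ∀ m, 1 ≤ m → τ m < τ (m + 1))
    (hsτ : ∀ m, 1 ≤ m → s (k m) ≤ τ m)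
    (hτinf : Filter.Tendsto τ Filter.atTop Filter.atTop)
    (U : ℝ → ZMod N → ℝ)
    (hU : ∀ (t : ℝ) (n : ZMod N),
      U t n = sSup (insert (0 : ℝ)
        {x | ∃ m, 1 ≤ m ∧ τ m ≤ t ∧ x = V (k m + 1) ((k m : ℕ) : ZMod N) n}))
    (T : ℝ) (hT : 0 < T)
    (hτ1 : τ 1 ≤ T)
    (hτm : ∀ m, 2 ≤ m → τ m ≤ T + s (k (m - 1) + 2 - N)) :
    ∀ t : ℝ, 0 ≤ t →
      Finset.univ.sup' Finset.univ_nonempty (fun n => t - U t n) ≤ T :=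
  gossip_return_events_guarantee_latency_bound_general N hN s hs0 hsmono V hV0 hVstep k τ hk1 hkmono
    hsτ hτinf U hU T hτ1 hτm
end
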